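/- Define I2(x,y) = (1/2)·ln(x² + y²) − x²/(x² + y²). Then for every (x,y) ∈ ℝ² with (x,y) ≠ (0,0), the function I2 is differentiable at (x,y) and (∂I2/∂x)(x,y)·(−y(3x² + y²)) + (∂I2/∂y)(x,y)·(x(x² − y²)) = 0; that is, I2 is a first integral of the planar system (ẋ, ẏ) = (−y(3x² + y²), x(x² − y²)). -/

import Mathlib

/-!
With `r = x² + y²`, the gradient of `I2` is `(x (x² - y²), y (3x² + y²)) / r²`: the vector
field `(-y (3x² + y²), x (x² - y²))` rotated by a right angle and rescaled, hence orthogonal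
to it.
-/

noncomputable def I2fun : ℝ × ℝ → ℝ := fun p =>
  (1/2) * Real.log (p.1 ^ 2 + p.2 ^ 2) - p.1 ^ 2 / (p.1 ^ 2 + p.2 ^ 2)

open ContinuousLinearMap

lemma sq_add_sq_ne_zero_of_ne_zero {x y : ℝ} (h : (x, y) ≠ (0, 0)) : x ^ 2 + y ^ 2 ≠ 0 := by
  contrapose! h
  obtain ⟨rfl, rfl⟩ := mul_self_add_mul_self_eq_zero.mp (by simpa only [sq] using h)
  rfl

theorem hasFDerivAt_I2fun {x y : ℝ} (h : x ^ 2 + y ^ 2 ≠ 0) :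
    HasFDerivAt I2fun
      ((x * (x ^ 2 - y ^ 2) / (x ^ 2 + y ^ 2) ^ 2) • fst ℝ ℝ ℝ +
        (y * (3 * x ^ 2 + y ^ 2) / (x ^ 2 + y ^ 2) ^ 2) • snd ℝ ℝ ℝ) (x, y) := by
  have hsq₁ := (hasFDerivAt_fst (p := (x, y)) (𝕜 := ℝ)).pow 2
  have hsq₂ := (hasFDerivAt_snd (p := (x, y)) (𝕜 := ℝ)).pow 2
  have hr := hsq₁.add hsq₂
  have hI := ((hr.log h).const_mul (1 / 2 : ℝ)).sub
    (hsq₁.mul ((hasDerivAt_inv h).comp_hasFDerivAt (x, y) hr))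
  refine (hI.congr_of_eventuallyEq (.of_forall fun p => ?_)).congr_fderiv ?_
  · simp [I2fun, div_eq_mul_inv]
  · refine ContinuousLinearMap.ext fun v => ?_
    simp only [Pi.add_apply, Function.comp_apply, Nat.add_one_sub_one, pow_one, nsmul_eq_mul,
      Nat.cast_ofNat, sub_apply, add_apply, smul_apply, coe_fst', coe_snd', smul_eq_mul]
    field_simp
    ring

/-- For `(x,y) ≠ (0,0)`, `I2` is differentiable at `(x,y)` and
its derivative annihilates the vector field `(−y(3x² + y²), x(x² − y²))`,
i.e. `I2` is a first integral. -/
theorem stmt_13 (x y : ℝ) (h : (x, y) ≠ (0, 0)) :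
    DifferentiableAt ℝ I2fun (x, y) ∧
    fderiv ℝ I2fun (x, y)
      (-(y * (3 * x ^ 2 + y ^ 2)), x * (x ^ 2 - y ^ 2)) = 0 := by
  have hI := hasFDerivAt_I2fun (sq_add_sq_ne_zero_of_ne_zero h)
  refine ⟨hI.differentiableAt, ?_⟩
  rw [hI.fderiv]
  simp only [add_apply, smul_apply, coe_fst', coe_snd', smul_eq_mul]
  ring
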